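/- arXiv:2301.00898 — 2 statements merged into one kernel-verified Lean document; each statement's English description precedes it below -/
import Mathlib

section
/- Let n ≥ 2 and let λ be a partition of n with a_k parts equal to k. The average major index over the conjugacy class C_λ equals (n² − n + 2a_2 − a_1² + a_1)/4. -/
/-- The conjugacy class of `S_n` consisting of permutations of cycle type `lam`
(Mathlib's `cycleType` omits fixed points, so we compare with the parts of `lam` not equal
to `1`). -/
noncomputable def conjClass (n : ℕ) (lam : n.Partition) : Finset (Equiv.Perm (Fin n)) :=
  Finset.univ.filter fun ω => ω.cycleType = Multiset.filter (fun i => i ≠ 1) lam.parts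

/-- The successor of `i` in `Fin n`, computed modulo `n`. -/
def succMod {n : ℕ} (i : Fin n) : Fin n := ⟨((i : ℕ) + 1) % n, Nat.mod_lt _ i.pos⟩

/-- The major index of a permutation: the sum of the (1-based) positions of its descents.
A `0`-based position `i : Fin n` corresponds to the `1`-based position `i + 1`. -/
def maj {n : ℕ} (ω : Equiv.Perm (Fin n)) : ℕ :=
  ∑ i ∈ Finset.univ.filter (fun i : Fin n => (i : ℕ) + 1 < n ∧ ω (succMod i) < ω i),
    ((i : ℕ) + 1)

/-!
Conjugation by the adjacent transposition `s = (i i+1)` is an involution of the class `C` that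
turns a descent at `i` into an ascent and vice versa, except on the permutations fixing both `i`
and `i+1` (ascents, fixed by it) and those swapping them (descents, also fixed). Hence
`2 · #{descent at i} = |C| + T - F`, where `F` and `T` count the permutations of `C` fixing,
resp. swapping, a given pair of points. As `S_n` acts transitively on ordered pairs of distinct
points, `F` and `T` do not depend on the pair, and double counting over all `n(n-1)` pairs gives
`n(n-1) F = a₁(a₁-1) |C|` and `n(n-1) T = 2 a₂ |C|`. Summing `(i+1) · #{descent at i}` over `i`
then gives the average major index.
-/

open Equiv Equiv.Perm Finset

section ConjInvariant

variable {G M : Type*} [Group G] [AddCommMonoid M] {C : Finset G}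

theorem sum_conj_eq_of_conj_mem (hC : ∀ σ, ∀ g ∈ C, σ * g * σ⁻¹ ∈ C) (σ : G) (f : G → M) :
    ∑ g ∈ C, f (σ * g * σ⁻¹) = ∑ g ∈ C, f g :=
  sum_nbij' (σ * · * σ⁻¹) (σ⁻¹ * · * σ) (fun g hg => hC σ g hg)
    (fun g hg => by simpa using hC σ⁻¹ g hg) (fun g _ => by group) (fun g _ => by group)
    (fun _ _ => rfl)

end ConjInvariant

section PairStatistics

variable {α : Type*} [DecidableEq α] {C : Finset (Perm α)}

theorem exists_perm_apply_eq_and_apply_eq {a b c d : α} (hab : a ≠ b) (hcd : c ≠ d) :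
    ∃ σ : Perm α, σ a = c ∧ σ b = d := by
  have hc : c ≠ swap a c b := by simpa using (swap a c).injective.ne hab
  exact ⟨swap (swap a c b) d * swap a c, by simp [swap_apply_of_ne_of_ne hc hcd], by simp⟩

theorem card_filter_conj_apply (hC : ∀ σ, ∀ ω ∈ C, σ * ω * σ⁻¹ ∈ C) (σ : Perm α) (a b a' b' : α) :
    #{ω ∈ C | ω (σ a) = σ a' ∧ ω (σ b) = σ b'} = #{ω ∈ C | ω a = a' ∧ ω b = b'} := by
  simp only [card_filter]
  rw [← sum_conj_eq_of_conj_mem hC σ]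
  simp [mul_apply]

theorem card_filter_fix_pair_eq (hC : ∀ σ, ∀ ω ∈ C, σ * ω * σ⁻¹ ∈ C) {a b c d : α} (hab : a ≠ b)
    (hcd : c ≠ d) : #{ω ∈ C | ω a = a ∧ ω b = b} = #{ω ∈ C | ω c = c ∧ ω d = d} := by
  obtain ⟨σ, rfl, rfl⟩ := exists_perm_apply_eq_and_apply_eq hab hcd
  exact (card_filter_conj_apply hC σ a b a b).symm

theorem card_filter_swap_pair_eq (hC : ∀ σ, ∀ ω ∈ C, σ * ω * σ⁻¹ ∈ C) {a b c d : α} (hab : a ≠ b)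
    (hcd : c ≠ d) : #{ω ∈ C | ω a = b ∧ ω b = a} = #{ω ∈ C | ω c = d ∧ ω d = c} := by
  obtain ⟨σ, rfl, rfl⟩ := exists_perm_apply_eq_and_apply_eq hab hcd
  exact (card_filter_conj_apply hC σ a b b a).symm

variable [Fintype α]

theorem card_mul_sub_mul_card_filter_fix_pair (hC : ∀ σ, ∀ ω ∈ C, σ * ω * σ⁻¹ ∈ C) {p q : α}
    (hpq : p ≠ q) :
    (Fintype.card α * Fintype.card α - Fintype.card α) * #{ω ∈ C | ω p = p ∧ ω q = q} =
      ∑ ω ∈ C, (#{a | ω a = a} * #{a | ω a = a} - #{a | ω a = a}) := by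
  calc _ = ∑ x ∈ (univ : Finset α).offDiag, #{ω ∈ C | ω x.1 = x.1 ∧ ω x.2 = x.2} := by
        rw [sum_congr rfl fun x hx => card_filter_fix_pair_eq hC (mem_offDiag.1 hx).2.2 hpq,
          sum_const, smul_eq_mul, offDiag_card, card_univ]
    _ = ∑ ω ∈ C, #{x ∈ (univ : Finset α).offDiag | ω x.1 = x.1 ∧ ω x.2 = x.2} :=
        sum_card_bipartiteAbove_eq_sum_card_bipartiteBelow _
    _ = _ := by
        refine sum_congr rfl fun ω _ => ?_
        rw [← offDiag_card]
        congr 1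
        ext x
        simp only [mem_filter, mem_offDiag, mem_univ, true_and]
        tauto

theorem card_mul_sub_mul_card_filter_swap_pair (hC : ∀ σ, ∀ ω ∈ C, σ * ω * σ⁻¹ ∈ C) {p q : α}
    (hpq : p ≠ q) :
    (Fintype.card α * Fintype.card α - Fintype.card α) * #{ω ∈ C | ω p = q ∧ ω q = p} =
      ∑ ω ∈ C, #{a | ω a ≠ a ∧ ω (ω a) = a} := by
  calc _ = ∑ x ∈ (univ : Finset α).offDiag, #{ω ∈ C | ω x.1 = x.2 ∧ ω x.2 = x.1} := by
        rw [sum_congr rfl fun x hx => card_filter_swap_pair_eq hC (mem_offDiag.1 hx).2.2 hpq,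
          sum_const, smul_eq_mul, offDiag_card, card_univ]
    _ = ∑ ω ∈ C, #{x ∈ (univ : Finset α).offDiag | ω x.1 = x.2 ∧ ω x.2 = x.1} :=
        sum_card_bipartiteAbove_eq_sum_card_bipartiteBelow _
    _ = _ := by
        refine sum_congr rfl fun ω _ => ?_
        refine card_nbij' Prod.fst (fun a => (a, ω a)) ?_ ?_ ?_ ?_ <;> intro x hx <;>
          simp only [coe_filter, mem_offDiag, mem_univ, true_and, Set.mem_ofPred_eq] at hx ⊢
        exacts [⟨by rw [hx.2.1]; exact hx.1.symm, by rw [hx.2.1, hx.2.2]⟩, ⟨Ne.symm hx.1, hx.2⟩,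
          Prod.ext rfl hx.2.1]

end PairStatistics

section CycleCount

variable {α : Type*} [Fintype α] [DecidableEq α]

theorem apply_ne_and_apply_apply_eq_iff (σ : Perm α) (a : α) :
    σ a ≠ a ∧ σ (σ a) = a ↔ #(σ.cycleOf a).support = 2 := by
  constructor
  · rintro ⟨h1, h2⟩
    have hc := isCycle_cycleOf σ h1
    have hsq : σ.cycleOf a ^ 2 = 1 := (hc.pow_eq_one_iff' (by rwa [cycleOf_apply_self])).2
      (by rw [cycleOf_pow_apply_self, pow_two, mul_apply, h2])
    have hdvd := orderOf_dvd_of_pow_eq_one hsq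
    rw [hc.orderOf] at hdvd
    have := two_le_card_support_cycleOf_iff.2 h1
    have := Nat.le_of_dvd two_pos hdvd
    omega
  · intro h
    have h1 : σ a ≠ a := support_cycleOf_nonempty.1 (card_pos.1 (by omega))
    have hsq : σ.cycleOf a ^ 2 = 1 := by
      rw [← h, ← (isCycle_cycleOf σ h1).orderOf]; exact pow_orderOf_eq_one _
    refine ⟨h1, ?_⟩
    simpa [cycleOf_pow_apply_self, pow_two] using congr($hsq a)

theorem card_filter_cycleFactorsFinset_card_support_eq (σ : Perm α) (k : ℕ) :
    #{c ∈ σ.cycleFactorsFinset | #c.support = k} = σ.cycleType.count k := by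
  rw [cycleType_def, Multiset.count_map, card_def, filter_val]
  simp only [Function.comp_apply, eq_comm]

theorem card_filter_card_support_cycleOf_eq (σ : Perm α) {k : ℕ} (hk : k ≠ 0) :
    #{a | #(σ.cycleOf a).support = k} = k * σ.cycleType.count k := by
  rw [← card_filter_cycleFactorsFinset_card_support_eq,
    card_eq_sum_card_fiberwise (f := σ.cycleOf) (t := {c ∈ σ.cycleFactorsFinset | #c.support = k})]
  · rw [mul_comm, ← smul_eq_mul, ← sum_const]
    refine sum_congr rfl fun c hc => ?_
    rw [mem_filter] at hc
    rw [← hc.2]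
    congr 1
    ext a
    simp only [mem_filter, mem_univ, true_and]
    constructor
    · rintro ⟨-, rfl⟩
      exact mem_support_cycleOf_iff.2 ⟨.refl _ _, cycleOf_mem_cycleFactorsFinset_iff.1 hc.1⟩
    · intro ha
      obtain rfl := cycle_is_cycleOf ha hc.1
      exact ⟨rfl, rfl⟩
  · intro a ha
    simp only [coe_filter, mem_univ, true_and, Set.mem_ofPred_eq] at ha ⊢
    refine ⟨cycleOf_mem_cycleFactorsFinset_iff.2 (mem_support.2 ?_), ha⟩
    exact support_cycleOf_nonempty.1 (card_pos.1 (by omega))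

theorem card_filter_apply_ne_and_apply_apply_eq (σ : Perm α) :
    #{a | σ a ≠ a ∧ σ (σ a) = a} = 2 * σ.cycleType.count 2 := by
  simp_rw [apply_ne_and_apply_apply_eq_iff]
  exact card_filter_card_support_cycleOf_eq σ two_ne_zero

end CycleCount

section Descents

variable {α : Type*} [LinearOrder α] [DecidableEq α] {p q x y : α} {C : Finset (Perm α)}

theorem swap_lt_swap_iff_of_covBy (hpq : p ⋖ q) (hne : ¬(x = p ∧ y = q))
    (hne' : ¬(x = q ∧ y = p)) :
    swap p q x < swap p q y ↔ x < y := by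
  have := hpq.lt
  have := hpq.le_of_lt (c := x)
  have := hpq.le_of_lt (c := y)
  rw [swap_apply_def, swap_apply_def]
  split_ifs <;> grind

theorem two_mul_card_descent_add_card_fix_pair (hC : ∀ σ, ∀ ω ∈ C, σ * ω * σ⁻¹ ∈ C)
    (hpq : p ⋖ q) :
    2 * #{ω ∈ C | ω q < ω p} + #{ω ∈ C | ω p = p ∧ ω q = q} =
      #C + #{ω ∈ C | ω p = q ∧ ω q = p} := by
  have key : ∀ ω : Perm α, ((if ω q < ω p then 1 else 0) +
      if swap p q (ω p) < swap p q (ω q) then 1 else 0) + (if ω p = p ∧ ω q = q then 1 else 0) =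
        1 + if ω p = q ∧ ω q = p then 1 else 0 := by
    intro ω
    by_cases hf : ω p = p ∧ ω q = q
    · simp [hf, hpq.lt.not_gt, hpq.ne]
    by_cases ht : ω p = q ∧ ω q = p
    · simp [ht, hpq.lt, hpq.ne]
    simp only [swap_lt_swap_iff_of_covBy hpq hf ht]
    rcases (ω.injective.ne hpq.ne).lt_or_gt with h | h <;> simp [h, h.not_gt, hf, ht]
  have hconj : ∀ ω : Perm α, (swap p q * ω * (swap p q)⁻¹) q < (swap p q * ω * (swap p q)⁻¹) p ↔
      swap p q (ω p) < swap p q (ω q) := by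
    simp [mul_apply, swap_inv]
  simp only [card_filter]
  rw [card_eq_sum_ones, two_mul]
  nth_rewrite 2 [← sum_conj_eq_of_conj_mem hC (swap p q)]
  simp only [hconj, ← sum_add_distrib]
  exact sum_congr rfl fun ω _ => key ω

end Descents

theorem Multiset.sum_filter_ne_one_add_count_one (s : Multiset ℕ) :
    (s.filter (· ≠ 1)).sum + s.count 1 = s.sum := by
  rw [← s.sum_filter_add_sum_filter_not (· ≠ 1)]
  simp [Multiset.filter_eq']

section ConjClass

variable {n : ℕ} {lam : n.Partition} {ω : Perm (Fin n)}

theorem conj_mem_conjClass : ∀ σ, ∀ ω ∈ conjClass n lam, σ * ω * σ⁻¹ ∈ conjClass n lam := by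
  intro σ ω h
  simpa [conjClass, cycleType_conj] using h

theorem conjClass_nonempty (n : ℕ) (lam : n.Partition) : (conjClass n lam).Nonempty := by
  have hex : ∃ ω : Perm (Fin n), ω.cycleType = lam.parts.filter (· ≠ 1) := by
    refine (exists_with_cycleType_iff (Fin n)).2 ⟨?_, fun a ha => ?_⟩
    · have := Multiset.sum_filter_ne_one_add_count_one lam.parts
      rw [lam.parts_sum] at this
      rw [Fintype.card_fin]
      omega
    · obtain ⟨ha, ha1⟩ := Multiset.mem_filter.1 ha
      have := lam.parts_pos ha
      omega
  obtain ⟨ω, hω⟩ := hex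
  exact ⟨ω, mem_filter.2 ⟨mem_univ _, hω⟩⟩

theorem card_fixed_of_mem_conjClass (h : ω ∈ conjClass n lam) :
    #{a | ω a = a} = lam.parts.count 1 := by
  have hsum := Multiset.sum_filter_ne_one_add_count_one lam.parts
  rw [lam.parts_sum, ← (mem_filter.1 h).2, sum_cycleType] at hsum
  have hsplit := card_filter_add_card_filter_not (s := univ) (fun a => ω a = a)
  change _ + #ω.support = _ at hsplit
  rw [card_univ, Fintype.card_fin] at hsplit
  omega

theorem card_filter_apply_ne_and_apply_apply_eq_of_mem_conjClass (h : ω ∈ conjClass n lam) :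
    #{a | ω a ≠ a ∧ ω (ω a) = a} = 2 * lam.parts.count 2 := by
  rw [card_filter_apply_ne_and_apply_apply_eq, (mem_filter.1 h).2,
    Multiset.count_filter_of_pos (by decide)]

end ConjClass

section MajorIndex

variable {n : ℕ}

theorem covBy_succMod {i : Fin n} (hi : (i : ℕ) + 1 < n) : i ⋖ succMod i := by
  simp [Fin.covBy_iff, succMod, Nat.mod_eq_of_lt hi]

theorem sum_maj_eq (C : Finset (Perm (Fin n))) :
    ∑ ω ∈ C, maj ω =
      ∑ i : Fin n with i.val + 1 < n, (i.val + 1) * #{ω ∈ C | ω (succMod i) < ω i} := by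
  calc ∑ ω ∈ C, maj ω
      = ∑ ω ∈ C, ∑ i : Fin n with i.val + 1 < n,
          if ω (succMod i) < ω i then i.val + 1 else 0 :=
        sum_congr rfl fun ω _ => by rw [maj, ← filter_filter, sum_filter]
    _ = _ := by
      rw [sum_comm]
      exact sum_congr rfl fun i _ => by rw [← sum_filter, sum_const, smul_eq_mul, mul_comm]

theorem sum_filter_add_one_lt_eq_sum_range (n : ℕ) :
    ∑ i : Fin n with i.val + 1 < n, (i.val + 1) = ∑ i ∈ range n, i := by
  rw [sum_filter, Fin.sum_univ_eq_sum_range (fun k => if k + 1 < n then k + 1 else 0)]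
  cases n with
  | zero => rfl
  | succ m =>
    rw [sum_range_succ, sum_range_succ']
    simp only [lt_self_iff_false, if_false, add_zero]
    exact sum_congr rfl fun k hk => if_pos (by simpa using hk)

theorem four_mul_sum_maj_add {C : Finset (Perm (Fin n))} (hC : ∀ σ, ∀ ω ∈ C, σ * ω * σ⁻¹ ∈ C)
    {p q : Fin n} (hpq : p ≠ q) :
    4 * ∑ ω ∈ C, maj ω + (n * n - n) * #{ω ∈ C | ω p = p ∧ ω q = q} =
      (n * n - n) * #C + (n * n - n) * #{ω ∈ C | ω p = q ∧ ω q = p} := by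
  have hdesc : ∀ i ∈ (univ : Finset (Fin n)).filter (fun i => i.val + 1 < n),
      2 * #{ω ∈ C | ω (succMod i) < ω i} + #{ω ∈ C | ω p = p ∧ ω q = q} =
        #C + #{ω ∈ C | ω p = q ∧ ω q = p} := by
    intro i hi
    have hcov := covBy_succMod (mem_filter.1 hi).2
    rw [card_filter_fix_pair_eq hC hpq hcov.ne, card_filter_swap_pair_eq hC hpq hcov.ne]
    exact two_mul_card_descent_add_card_fix_pair hC hcov
  have hgauss : n * n - n = 2 * ∑ i : Fin n with i.val + 1 < n, (i.val + 1) := by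
    rw [sum_filter_add_one_lt_eq_sum_range, ← Nat.mul_sub_one, ← sum_range_id_mul_two, mul_comm]
  rw [sum_maj_eq, hgauss]
  calc _ = 2 * ∑ i : Fin n with i.val + 1 < n, (i.val + 1) *
        (2 * #{ω ∈ C | ω (succMod i) < ω i} + #{ω ∈ C | ω p = p ∧ ω q = q}) := by
        rw [mul_sum, mul_sum, sum_mul, mul_sum, ← sum_add_distrib]
        exact sum_congr rfl fun _ _ => by ring
    _ = 2 * ∑ i : Fin n with i.val + 1 < n, (i.val + 1) *
        (#C + #{ω ∈ C | ω p = q ∧ ω q = p}) := by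
        rw [sum_congr rfl fun i hi => by rw [hdesc i hi]]
    _ = _ := by rw [← sum_mul]; ring

end MajorIndex

theorem stmt6 (n : ℕ) (hn : 2 ≤ n) (lam : n.Partition) (a1 a2 : ℕ)
    (ha1 : a1 = Multiset.count 1 lam.parts) (ha2 : a2 = Multiset.count 2 lam.parts) :
    (∑ ω ∈ conjClass n lam, (maj ω : ℝ)) / ((conjClass n lam).card : ℝ)
      = ((n : ℝ) ^ 2 - (n : ℝ) + 2 * (a2 : ℝ) - (a1 : ℝ) ^ 2 + (a1 : ℝ)) / 4 := by
  subst ha1 ha2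
  have hC := conj_mem_conjClass (lam := lam)
  have hpq : (⟨0, by omega⟩ : Fin n) ≠ ⟨1, by omega⟩ := by simp
  have hfix := card_mul_sub_mul_card_filter_fix_pair hC hpq
  have hswap := card_mul_sub_mul_card_filter_swap_pair hC hpq
  rw [Fintype.card_fin, sum_congr rfl fun ω hω => by rw [card_fixed_of_mem_conjClass hω],
    sum_const, smul_eq_mul] at hfix
  rw [Fintype.card_fin, sum_congr rfl fun ω hω =>
    card_filter_apply_ne_and_apply_apply_eq_of_mem_conjClass hω, sum_const, smul_eq_mul] at hswap
  have hmaj := four_mul_sum_maj_add hC hpq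
  rw [hfix, hswap] at hmaj
  have hR := congrArg (Nat.cast : ℕ → ℝ) hmaj
  push_cast [Nat.cast_sub (Nat.le_mul_self _)] at hR
  have hc : (0 : ℝ) < #(conjClass n lam) := by exact_mod_cast (conjClass_nonempty n lam).card_pos
  rw [div_eq_div_iff hc.ne' four_ne_zero]
  linear_combination hR
end

section
/- Let n ≥ 3 and let λ be a partition of n with a_k parts equal to k. The average number of inversions over the conjugacy class C_λ equals (3n² − n + 2a_2 − a_1² + a_1 − 2n·a_1)/12. -/
/-- The number of inversions of a permutation: pairs `(i, j)` with `i < j` and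
`ω i > ω j`. -/
def invStat {n : ℕ} (ω : Equiv.Perm (Fin n)) : ℕ :=
  (Finset.univ.filter fun p : Fin n × Fin n => p.1 < p.2 ∧ ω p.2 < ω p.1).card

/-!
Fix `ω₀` of cycle type `λ`. Since `σ ↦ σ ω₀ σ⁻¹` covers the class `C_λ` evenly, the average of
`inv` over `C_λ` is its average over all conjugates `σ ω₀ σ⁻¹`, `σ ∈ S_n`. Substituting `i = σ a`,
`j = σ b`, an inversion `(i, j)` of `σ ω₀ σ⁻¹` is a pair `(a, b)` with `σ a < σ b` and
`σ (ω₀ b) < σ (ω₀ a)`, so the average is a sum over pairs `(a, b)` of the probability of this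
event for uniform `σ`. That probability only depends on the coincidences among `a, b, ω₀ a, ω₀ b`
(it is `1/4` for four distinct points, `1/6` or `1/3` for three, `1/2` or `0` for two), and
summing over all pairs leaves only the numbers of fixed points and of points on `2`-cycles.
-/

open Finset Equiv Equiv.Perm

section Conj

variable {G : Type*} [Group G] [Fintype G] [DecidableEq G]

lemma card_filter_conj_eq_of_isConj {g₀ x : G} (h : IsConj g₀ x) :
    #{g | g * g₀ * g⁻¹ = x} = #{g | g * g₀ * g⁻¹ = g₀} := by
  obtain ⟨τ, rfl⟩ := isConj_iff.1 h
  refine card_equiv (Equiv.mulLeft τ⁻¹) fun g => ?_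
  have hconj : τ⁻¹ * g * g₀ * (τ⁻¹ * g)⁻¹ = τ⁻¹ * (g * g₀ * g⁻¹) * τ := by group
  simp only [mem_filter, mem_univ, true_and, coe_mulLeft, hconj]
  constructor
  · intro h
    rw [h]
    group
  · intro h
    conv_rhs => rw [← h]
    group

lemma sum_conj_eq_card_mul_sum {M : Type*} [AddCommMonoid M] (g₀ : G) (C : Finset G)
    (hC : ∀ x, x ∈ C ↔ IsConj g₀ x) (f : G → M) :
    ∑ g, f (g * g₀ * g⁻¹) = #{g | g * g₀ * g⁻¹ = g₀} • ∑ x ∈ C, f x := by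
  rw [← sum_fiberwise_of_maps_to (t := C) (g := fun g => g * g₀ * g⁻¹)
    (fun g _ => (hC _).2 (isConj_iff.2 ⟨g, rfl⟩)), smul_sum]
  refine sum_congr rfl fun x hx => ?_
  rw [← card_filter_conj_eq_of_isConj ((hC x).1 hx), ← sum_const]
  exact sum_congr (by ext; simp) fun g hg => by rw [(mem_filter.1 hg).2]

lemma sum_div_card_eq_sum_conj_div_card {K : Type*} [Semifield K] [CharZero K] (g₀ : G)
    (C : Finset G) (hC : ∀ x, x ∈ C ↔ IsConj g₀ x) (f : G → K) :
    (∑ x ∈ C, f x) / #C = (∑ g, f (g * g₀ * g⁻¹)) / Fintype.card G := by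
  have hcard := sum_conj_eq_card_mul_sum g₀ C hC fun _ => (1 : ℕ)
  simp only [sum_const, smul_eq_mul, mul_one, card_univ] at hcard
  have hK : (#{g | g * g₀ * g⁻¹ = g₀} : K) ≠ 0 := by
    exact_mod_cast (card_pos.2 ⟨1, by simp⟩).ne'
  rw [sum_conj_eq_card_mul_sum g₀ C hC f, hcard, nsmul_eq_mul, Nat.cast_mul,
    mul_div_mul_left _ _ hK]

end Conj

lemma Nat.Partition.sum_filter_ne_one_add_count_one {n : ℕ} (lam : n.Partition) :
    (lam.parts.filter (· ≠ 1)).sum + lam.parts.count 1 = n := by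
  have h := Multiset.sum_filter_add_sum_filter_not (s := lam.parts) (· ≠ 1)
  simp only [not_not, Multiset.filter_eq', Multiset.sum_replicate, smul_eq_mul, mul_one,
    lam.parts_sum] at h
  exact h

namespace Equiv.Perm

variable {α : Type*} [Fintype α] [DecidableEq α]

lemma card_fixed_add_sum_cycleType (σ : Perm α) :
    #{x | σ x = x} + σ.cycleType.sum = Fintype.card α := by
  rw [sum_cycleType, support, ← card_univ]
  exact card_filter_add_card_filter_not _

lemma apply_apply_eq_self_iff_card_support_cycleOf {σ : Perm α} {x : α} (hx : σ x ≠ x) :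
    σ (σ x) = x ↔ #(σ.cycleOf x).support = 2 := by
  have hc := isCycle_cycleOf σ hx
  have h2 := two_le_card_support_cycleOf_iff.2 hx
  rw [← Perm.mul_apply, ← sq, ← cycleOf_pow_apply_self,
    ← hc.pow_eq_one_iff' (by rwa [cycleOf_apply_self]), ← orderOf_dvd_iff_pow_eq_one, hc.orderOf]
  exact ⟨fun h => le_antisymm (Nat.le_of_dvd two_pos h) h2, fun h => h ▸ dvd_rfl⟩

lemma card_filter_apply_ne_and_apply_apply_eq (σ : Perm α) :
    #{x | σ x ≠ x ∧ σ (σ x) = x} = 2 * σ.cycleType.count 2 := by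
  set T := σ.cycleFactorsFinset.filter fun c => #c.support = 2
  have hT : #{x | σ x ≠ x ∧ σ (σ x) = x} = #(T.biUnion support) := by
    congr 1
    ext x
    simp only [mem_filter, mem_univ, true_and, mem_biUnion, T]
    constructor
    · rintro ⟨hx, hxx⟩
      exact ⟨σ.cycleOf x, ⟨cycleOf_mem_cycleFactorsFinset_iff.2 (mem_support.2 hx),
        (apply_apply_eq_self_iff_card_support_cycleOf hx).1 hxx⟩,
        mem_support_cycleOf_iff.2 ⟨SameCycle.refl _ _, mem_support.2 hx⟩⟩
    · rintro ⟨c, ⟨hc, hc2⟩, hxc⟩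
      rw [cycle_is_cycleOf hxc hc] at hc2 hxc
      have hx : σ x ≠ x := mem_support.1 (mem_support_cycleOf_iff.1 hxc).2
      exact ⟨hx, (apply_apply_eq_self_iff_card_support_cycleOf hx).2 hc2⟩
  have hcount : #T = σ.cycleType.count 2 := by
    rw [cycleType_def, Multiset.count_map]
    exact congrArg Multiset.card (Multiset.filter_congr fun c _ => eq_comm)
  rw [hT, card_biUnion fun c hc d hd hcd => (σ.cycleFactorsFinset_pairwise_disjoint
      (mem_filter.1 hc).1 (mem_filter.1 hd).1 hcd).disjoint_support,
    sum_const_nat fun c hc => (mem_filter.1 hc).2, hcount, mul_comm]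

lemma card_apply_apply_eq_self (σ : Perm α) :
    #{x | σ (σ x) = x} = #{x | σ x = x} + 2 * σ.cycleType.count 2 := by
  rw [← card_filter_apply_ne_and_apply_apply_eq,
    ← card_filter_add_card_filter_not (s := {x | σ (σ x) = x}) (fun x => σ x = x),
    filter_filter, filter_filter]
  congr 2
  · ext x
    simp only [mem_filter, mem_univ, true_and, and_iff_right_iff_imp]
    intro h
    rw [h, h]
  · ext x
    simp only [mem_filter, mem_univ, true_and, and_comm]

lemma card_filter_mul_right (P : Perm α → Prop) [DecidablePred P] (π : Perm α) :
    #{σ | P (σ * π)} = #{σ | P σ} :=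
  card_equiv (Equiv.mulRight π) (by simp)

lemma card_mul_card_filter_eq_card {ι : Type*} [Fintype ι] (π : ι → Perm α)
    (P : Perm α → Prop) [DecidablePred P] (h : ∀ σ, #{i | P (σ * π i)} = 1) :
    Fintype.card ι * #{σ | P σ} = Fintype.card (Perm α) := by
  calc Fintype.card ι * #{σ | P σ} = ∑ i, #{σ | P (σ * π i)} := by
        simp [card_filter_mul_right]
    _ = ∑ σ, #{i | P (σ * π i)} := by simp only [card_filter]; exact sum_comm
    _ = Fintype.card (Perm α) := by simp [h]

/-- `12` times the probability, for uniform `σ`, that `(σ a, σ b)` is an inversion of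
`σ * ω * σ⁻¹`: it is `3` when `a, b, ω b, ω a` are distinct, and each coincidence among these
four points corrects it by one unit. -/
def conjInvWeight (ω : Perm α) (a b : α) : ℤ :=
  3 - 3 * (if a = b then 1 else 0) + (if ω a = b then 1 else 0) + (if ω b = a then 1 else 0)
    - (if ω a = a then 1 else 0) - (if ω b = b then 1 else 0)
    + (if ω a = b ∧ ω b = a then 1 else 0) - (if ω a = a then 1 else 0) * (if ω b = b then 1 else 0)

lemma sum_sum_conjInvWeight (ω : Perm α) :
    ∑ a, ∑ b, conjInvWeight ω a b
      = 3 * (Fintype.card α : ℤ) ^ 2 - Fintype.card α - 2 * Fintype.card α * #{x | ω x = x}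
        - (#{x | ω x = x} : ℤ) ^ 2 + #{x | ω (ω x) = x} := by
  have hpre : ∀ a : α, ∑ b, (if ω b = a then 1 else 0 : ℤ) = 1 := fun a => by
    simp [← Equiv.eq_symm_apply]
  simp only [conjInvWeight, sum_add_distrib, sum_sub_distrib, ← mul_sum, ← sum_mul, hpre, ite_and,
    sum_ite_eq, mem_univ, if_true, sum_const, card_univ, nsmul_eq_mul, sum_boole]
  ring

variable [LinearOrder α]

lemma two_mul_card_lt {a b : α} (hab : a ≠ b) :
    2 * #{σ : Perm α | σ a < σ b} = Fintype.card (Perm α) := by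
  refine card_mul_card_filter_eq_card ![1, swap a b] _ fun σ => ?_
  rw [card_filter]
  simp only [Fin.sum_univ_succ, Fin.sum_univ_zero, Matrix.cons_val_zero, Matrix.cons_val_succ,
    Perm.mul_apply, Perm.one_apply, swap_apply_left, swap_apply_right]
  rcases (σ.injective.ne hab).lt_or_gt with h | h <;> simp [h, h.not_gt]

lemma six_mul_card_chain {a b c : α} (hab : a ≠ b) (hac : a ≠ c) (hbc : b ≠ c) :
    6 * #{σ : Perm α | σ a < σ b ∧ σ b < σ c} = Fintype.card (Perm α) := by
  refine card_mul_card_filter_eq_card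
    ![1, swap a b, swap b c, swap a c, swap a b * swap a c, swap a c * swap a b] _ fun σ => ?_
  rw [card_filter]
  simp only [Fin.sum_univ_succ, Fin.sum_univ_zero, Matrix.cons_val_zero, Matrix.cons_val_succ,
    Perm.mul_apply, Perm.one_apply, swap_apply_left, swap_apply_right, swap_apply_of_ne_of_ne,
    hab, hac, hbc, hab.symm, hac.symm, hbc.symm, ne_eq, not_false_eq_true]
  rcases (σ.injective.ne hab).lt_or_gt with h₁ | h₁ <;>
  rcases (σ.injective.ne hac).lt_or_gt with h₂ | h₂ <;>
  rcases (σ.injective.ne hbc).lt_or_gt with h₃ | h₃ <;>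
  first | (exfalso; order) | simp [h₁, h₂, h₃, h₁.not_gt, h₂.not_gt, h₃.not_gt]

lemma three_mul_card_min {a b c : α} (hab : a ≠ b) (hac : a ≠ c) (hbc : b ≠ c) :
    3 * #{σ : Perm α | σ a < σ b ∧ σ a < σ c} = Fintype.card (Perm α) := by
  refine card_mul_card_filter_eq_card ![1, swap a b, swap a c] _ fun σ => ?_
  rw [card_filter]
  simp only [Fin.sum_univ_succ, Fin.sum_univ_zero, Matrix.cons_val_zero, Matrix.cons_val_succ,
    Perm.mul_apply, Perm.one_apply, swap_apply_left, swap_apply_right, swap_apply_of_ne_of_ne,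
    hbc, hab.symm, hac.symm, hbc.symm, ne_eq, not_false_eq_true]
  rcases (σ.injective.ne hab).lt_or_gt with h₁ | h₁ <;>
  rcases (σ.injective.ne hac).lt_or_gt with h₂ | h₂ <;>
  rcases (σ.injective.ne hbc).lt_or_gt with h₃ | h₃ <;>
  first | (exfalso; order) | simp [h₁, h₂, h₃, h₁.not_gt, h₂.not_gt, h₃.not_gt]

lemma three_mul_card_max {a b c : α} (hab : a ≠ b) (hac : a ≠ c) (hbc : b ≠ c) :
    3 * #{σ : Perm α | σ a < σ c ∧ σ b < σ c} = Fintype.card (Perm α) := by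
  refine card_mul_card_filter_eq_card ![1, swap a c, swap b c] _ fun σ => ?_
  rw [card_filter]
  simp only [Fin.sum_univ_succ, Fin.sum_univ_zero, Matrix.cons_val_zero, Matrix.cons_val_succ,
    Perm.mul_apply, Perm.one_apply, swap_apply_left, swap_apply_right, swap_apply_of_ne_of_ne,
    hab, hac, hbc, hab.symm, ne_eq, not_false_eq_true]
  rcases (σ.injective.ne hab).lt_or_gt with h₁ | h₁ <;>
  rcases (σ.injective.ne hac).lt_or_gt with h₂ | h₂ <;>
  rcases (σ.injective.ne hbc).lt_or_gt with h₃ | h₃ <;>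
  first | (exfalso; order) | simp [h₁, h₂, h₃, h₁.not_gt, h₂.not_gt, h₃.not_gt]

lemma four_mul_card_lt_and_lt {a b c d : α} (hab : a ≠ b) (hcd : c ≠ d) (hac : a ≠ c)
    (had : a ≠ d) (hbc : b ≠ c) (hbd : b ≠ d) :
    4 * #{σ : Perm α | σ a < σ b ∧ σ c < σ d} = Fintype.card (Perm α) := by
  refine card_mul_card_filter_eq_card ![1, swap a b, swap c d, swap a b * swap c d] _ fun σ => ?_
  rw [card_filter]
  simp only [Fin.sum_univ_succ, Fin.sum_univ_zero, Matrix.cons_val_zero, Matrix.cons_val_succ,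
    Perm.mul_apply, Perm.one_apply, swap_apply_left, swap_apply_right, swap_apply_of_ne_of_ne,
    hac, had, hbc, hbd, hac.symm, had.symm, hbc.symm, hbd.symm, ne_eq, not_false_eq_true]
  rcases (σ.injective.ne hab).lt_or_gt with h₁ | h₁ <;>
  rcases (σ.injective.ne hcd).lt_or_gt with h₂ | h₂ <;>
  simp [h₁, h₂, h₁.not_gt, h₂.not_gt]

lemma twelve_mul_card_conj_inversion_of_not_fixed {ω : Perm α} {a b : α} (hab : a ≠ b)
    (ha : ω a ≠ a) (hb : ω b ≠ b) :
    12 * (#{σ : Perm α | σ a < σ b ∧ σ (ω b) < σ (ω a)} : ℤ)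
      = conjInvWeight ω a b * Fintype.card (Perm α) := by
  by_cases hωab : ω a = b <;> by_cases hωba : ω b = a
  · have hw : conjInvWeight ω a b = 6 := by simp [conjInvWeight, hωab, hωba, hab, hab.symm]
    have h := two_mul_card_lt (α := α) hab
    rw [show #{σ : Perm α | σ a < σ b ∧ σ (ω b) < σ (ω a)} = #{σ : Perm α | σ a < σ b} by
      simp only [hωab, hωba, and_self], hw]
    omega
  · have hw : conjInvWeight ω a b = 4 := by simp [conjInvWeight, hb, hωab, hωba, hab, hab.symm]
    have h := three_mul_card_max (Ne.symm hωba) hab hb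
    rw [show #{σ : Perm α | σ a < σ b ∧ σ (ω b) < σ (ω a)}
        = #{σ : Perm α | σ a < σ b ∧ σ (ω b) < σ b} by simp only [hωab], hw]
    omega
  · have hw : conjInvWeight ω a b = 4 := by simp [conjInvWeight, ha, hωab, hωba, hab]
    have h := three_mul_card_min hab (Ne.symm ha) (Ne.symm hωab)
    rw [show #{σ : Perm α | σ a < σ b ∧ σ (ω b) < σ (ω a)}
        = #{σ : Perm α | σ a < σ b ∧ σ a < σ (ω a)} by simp only [hωba], hw]
    omega
  · have hw : conjInvWeight ω a b = 3 := by simp [conjInvWeight, ha, hb, hωab, hωba, hab]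
    have h := four_mul_card_lt_and_lt hab (ω.injective.ne hab.symm) (Ne.symm hωba) (Ne.symm ha)
      (Ne.symm hb) (Ne.symm hωab)
    rw [hw]
    omega

lemma twelve_mul_card_conj_inversion (ω : Perm α) (a b : α) :
    12 * (#{σ : Perm α | σ a < σ b ∧ σ (ω b) < σ (ω a)} : ℤ)
      = conjInvWeight ω a b * Fintype.card (Perm α) := by
  obtain rfl | hab := eq_or_ne a b
  · by_cases ha : ω a = a <;> simp [conjInvWeight, ha]
  by_cases ha : ω a = a <;> by_cases hb : ω b = b
  · have hw : conjInvWeight ω a b = 0 := by simp [conjInvWeight, ha, hb, hab, hab.symm]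
    have h : #{σ : Perm α | σ a < σ b ∧ σ (ω b) < σ (ω a)} = 0 := by
      rw [card_eq_zero, filter_eq_empty_iff, ha, hb]
      exact fun σ _ h => h.1.not_gt h.2
    rw [h, hw]
    simp
  · have hωba : ω b ≠ a := fun h => hab (ω.injective (ha.trans h.symm))
    have hw : conjInvWeight ω a b = 2 := by simp [conjInvWeight, ha, hb, hab, hωba]
    have h := six_mul_card_chain hωba hb hab
    rw [show #{σ : Perm α | σ a < σ b ∧ σ (ω b) < σ (ω a)}
        = #{σ : Perm α | σ (ω b) < σ a ∧ σ a < σ b} by simp only [ha, and_comm], hw]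
    omega
  · have hωab : ω a ≠ b := fun h => hab (ω.injective (h.trans hb.symm))
    have hw : conjInvWeight ω a b = 2 := by simp [conjInvWeight, ha, hb, hab, hab.symm, hωab]
    have h := six_mul_card_chain hab (Ne.symm ha) (Ne.symm hωab)
    rw [show #{σ : Perm α | σ a < σ b ∧ σ (ω b) < σ (ω a)}
        = #{σ : Perm α | σ a < σ b ∧ σ b < σ (ω a)} by simp only [hb], hw]
    omega
  · exact twelve_mul_card_conj_inversion_of_not_fixed hab ha hb

end Equiv.Perm

section Inversions

variable {n : ℕ}

lemma invStat_conj (ω σ : Perm (Fin n)) :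
    invStat (σ * ω * σ⁻¹) = #{p : Fin n × Fin n | σ p.1 < σ p.2 ∧ σ (ω p.2) < σ (ω p.1)} := by
  rw [invStat]
  refine card_equiv (σ.prodCongr σ).symm fun p => ?_
  rw [mem_filter, mem_filter]
  simp

lemma sum_invStat_conj_div_card (ω : Perm (Fin n)) :
    (∑ σ, (invStat (σ * ω * σ⁻¹) : ℝ)) / Fintype.card (Perm (Fin n))
      = (3 * (n : ℝ) ^ 2 - n - 2 * n * #{x | ω x = x} - (#{x | ω x = x} : ℝ) ^ 2
          + #{x | ω (ω x) = x}) / 12 := by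
  have hsum : ∑ σ, (invStat (σ * ω * σ⁻¹) : ℤ)
      = ∑ a, ∑ b, (#{σ : Perm (Fin n) | σ a < σ b ∧ σ (ω b) < σ (ω a)} : ℤ) := by
    simp only [invStat_conj, card_filter, Nat.cast_sum, Nat.cast_ite, Nat.cast_one,
      Nat.cast_zero]
    rw [sum_comm]
    exact Fintype.sum_prod_type _
  have h12 : 12 * ∑ σ, (invStat (σ * ω * σ⁻¹) : ℤ)
      = (∑ a, ∑ b, conjInvWeight ω a b) * Fintype.card (Perm (Fin n)) := by
    simp only [hsum, mul_sum, twelve_mul_card_conj_inversion, sum_mul]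
  rw [sum_sum_conjInvWeight, Fintype.card_fin] at h12
  have h12R : 12 * ∑ σ, (invStat (σ * ω * σ⁻¹) : ℝ)
      = (3 * (n : ℝ) ^ 2 - n - 2 * n * #{x | ω x = x} - (#{x | ω x = x} : ℝ) ^ 2
          + #{x | ω (ω x) = x}) * Fintype.card (Perm (Fin n)) := by
    exact_mod_cast h12
  rw [div_eq_div_iff (by positivity) (by norm_num)]
  linarith

end Inversions

theorem stmt7_general (n : ℕ) (lam : n.Partition) (a1 a2 : ℕ)
    (ha1 : a1 = Multiset.count 1 lam.parts) (ha2 : a2 = Multiset.count 2 lam.parts) :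
    (∑ ω ∈ conjClass n lam, (invStat ω : ℝ)) / ((conjClass n lam).card : ℝ)
      = (3 * (n : ℝ) ^ 2 - (n : ℝ) + 2 * (a2 : ℝ) - (a1 : ℝ) ^ 2 + (a1 : ℝ)
          - 2 * (n : ℝ) * (a1 : ℝ)) / 12 := by
  have hpart := lam.sum_filter_ne_one_add_count_one
  obtain ⟨ω₀, hω₀⟩ : ∃ ω₀ : Perm (Fin n), ω₀.cycleType = lam.parts.filter (· ≠ 1) := by
    refine (exists_with_cycleType_iff _).2 ⟨by simp only [Fintype.card_fin]; omega, ?_⟩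
    intro k hk
    have := lam.parts_pos (Multiset.mem_filter.1 hk).1
    have := (Multiset.mem_filter.1 hk).2
    omega
  have hC : ∀ ω, ω ∈ conjClass n lam ↔ IsConj ω₀ ω := by
    simp only [conjClass, mem_filter, mem_univ, true_and, isConj_iff_cycleType_eq, hω₀, eq_comm,
      implies_true]
  have hfix : #{x | ω₀ x = x} = a1 := by
    have := card_fixed_add_sum_cycleType ω₀
    rw [hω₀, Fintype.card_fin] at this
    omega
  have hinv : #{x | ω₀ (ω₀ x) = x} = a1 + 2 * a2 := by
    rw [card_apply_apply_eq_self, hfix, hω₀, Multiset.count_filter_of_pos (by norm_num), ha2]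
  rw [sum_div_card_eq_sum_conj_div_card ω₀ _ hC, sum_invStat_conj_div_card, hfix, hinv]
  push_cast
  ring

theorem stmt7 (n : ℕ) (hn : 3 ≤ n) (lam : n.Partition) (a1 a2 : ℕ)
    (ha1 : a1 = Multiset.count 1 lam.parts) (ha2 : a2 = Multiset.count 2 lam.parts) :
    (∑ ω ∈ conjClass n lam, (invStat ω : ℝ)) / ((conjClass n lam).card : ℝ)
      = (3 * (n : ℝ) ^ 2 - (n : ℝ) + 2 * (a2 : ℝ) - (a1 : ℝ) ^ 2 + (a1 : ℝ)
          - 2 * (n : ℝ) * (a1 : ℝ)) / 12 :=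
  stmt7_general n lam a1 a2 ha1 ha2
end
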